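/- For any derivation d : ℝ → ℝ, any α > 0 and any positive rational p, the function F(x) = x^α · exp(d(x)/x) satisfies F(H_p(x,y)) ≤ H_{p/α}(F(x), F(y)) for all x,y > 0. -/
import Mathlib
open Real

lemma deriv_pow_nat (d : ℝ → ℝ)
    (hleib : ∀ x y : ℝ, d (x * y) = x * d y + y * d x) :
    ∀ (z : ℝ) (n : ℕ), d (z ^ (n + 1)) = (n + 1) * z ^ n * d z := by
  intro z n
  induction n with
  | zero => simp
  | succ k ih =>
    have : z ^ (k + 2) = z ^ (k + 1) * z := by ring
    rw [this, hleib, ih]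
    push_cast
    ring

lemma deriv_rpow (d : ℝ → ℝ)
    (hleib : ∀ x y : ℝ, d (x * y) = x * d y + y * d x) :
    ∀ z : ℝ, 0 < z → ∀ q : ℚ, 0 < q →
      d (z ^ (q : ℝ)) / z ^ (q : ℝ) = (q : ℝ) * (d z / z) := by
  intro z hz q hq
  have hnum : 0 < q.num := Rat.num_pos.mpr hq
  obtain ⟨a, ha⟩ : ∃ a : ℕ, q.num.toNat = a + 1 := ⟨q.num.toNat - 1, by omega⟩
  obtain ⟨b, hb⟩ : ∃ b : ℕ, q.den = b + 1 :=
    ⟨q.den - 1, (Nat.succ_pred_eq_of_pos q.pos).symm⟩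
  set w := z ^ (q : ℝ) with hwdef
  have hw : 0 < w := rpow_pos_of_pos hz _
  have hqab : (q : ℝ) * (b + 1) = (a + 1) := by
    have h1 : ((q.num : ℝ)) = (a : ℝ) + 1 := by
      have : q.num = (a : ℤ) + 1 := by omega
      exact_mod_cast congrArg (fun n : ℤ => (n : ℝ)) this
    have h2 : ((q.den : ℝ)) = (b : ℝ) + 1 := by exact_mod_cast congrArg (Nat.cast (R := ℝ)) hb
    have h3 : (q : ℝ) = (q.num : ℝ) / (q.den : ℝ) := Rat.cast_def q
    rw [h3, h1, h2]
    field_simp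
  have hwb : w ^ (b + 1) = z ^ (a + 1) := by
    rw [hwdef, ← rpow_natCast (z ^ (q:ℝ)) (b+1), ← rpow_mul hz.le]
    push_cast
    rw [hqab]
    rw [← rpow_natCast z (a+1)]
    push_cast
    ring_nf
  have e1 := deriv_pow_nat d hleib w b
  have e2 := deriv_pow_nat d hleib z a
  have key : ((b:ℝ) + 1) * d w * z = ((a:ℝ) + 1) * d z * w := by
    have h3 : w ^ (b + 1) * (((b:ℝ) + 1) * d w * z) = w ^ (b + 1) * (((a:ℝ) + 1) * d z * w) := by
      calc w ^ (b + 1) * (((b:ℝ) + 1) * d w * z)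
          = (((b:ℝ) + 1) * w ^ b * d w) * (w * z) := by ring
        _ = (((a:ℝ) + 1) * z ^ a * d z) * (w * z) := by rw [← e1, ← e2, hwb]
        _ = ((a:ℝ) + 1) * d z * w * (z ^ a * z) := by ring
        _ = ((a:ℝ) + 1) * d z * w * z ^ (a + 1) := by ring
        _ = w ^ (b + 1) * (((a:ℝ) + 1) * d z * w) := by rw [hwb]; ring
    exact mul_left_cancel₀ (pow_ne_zero _ hw.ne') h3
  have hqv : (q : ℝ) = ((a:ℝ) + 1) / ((b:ℝ) + 1) := by
    field_simp at hqab ⊢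
    linarith
  rw [hqv]
  field_simp
  linarith [key]

noncomputable def powerMean' (r x y : ℝ) : ℝ :=
  if r = 0 then Real.sqrt (x * y) else ((x ^ r + y ^ r) / 2) ^ (1 / r)

theorem stmt_11 (d : ℝ → ℝ)
    (hadd : ∀ x y : ℝ, d (x + y) = d x + d y)
    (hleib : ∀ x y : ℝ, d (x * y) = x * d y + y * d x)
    (α : ℝ) (hα : 0 < α) (p : ℚ) (hp : 0 < p)
    (F : ℝ → ℝ) (hF : ∀ x > 0, F x = x ^ α * Real.exp (d x / x)) :
    ∀ x > 0, ∀ y > 0,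
      F (powerMean' (p : ℝ) x y) ≤ powerMean' ((p : ℝ) / α) (F x) (F y) := by
  have dhalf : ∀ z : ℝ, d (z / 2) = d z / 2 := by
    intro z
    have h := hadd (z / 2) (z / 2)
    rw [add_halves] at h
    linarith
  have Lp := deriv_rpow d hleib
  intro x hx y hy
  have hp0 : (0 : ℝ) < (p : ℝ) := by exact_mod_cast hp
  have hpne : (p : ℝ) ≠ 0 := hp0.ne'
  have hpane : (p : ℝ) / α ≠ 0 := by positivity
  simp only [powerMean', if_neg hpne, if_neg hpane]
  set xp := x ^ (p : ℝ) with hxpdef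
  set yp := y ^ (p : ℝ) with hypdef
  have hxp : 0 < xp := by rw [hxpdef]; positivity
  have hyp : 0 < yp := by rw [hypdef]; positivity
  set A := (xp + yp) / 2 with hAdef
  have hA : 0 < A := by rw [hAdef]; positivity
  set m := A ^ (1 / (p : ℝ)) with hmdef
  have hm : 0 < m := by rw [hmdef]; positivity
  set s := ((p : ℝ) / α) * (d x / x) with hsdef
  set t := ((p : ℝ) / α) * (d y / y) with htdef
  set w := xp / (xp + yp) with hwdef
  have hw0 : 0 ≤ w := by rw [hwdef]; positivity
  have hw1 : 0 ≤ 1 - w := by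
    rw [hwdef, sub_nonneg, div_le_one (by positivity)]
    linarith
  have hLxp : d xp / xp = (p : ℝ) * (d x / x) := by
    rw [hxpdef]; exact Lp x hx p hp
  have hLyp : d yp / yp = (p : ℝ) * (d y / y) := by
    rw [hypdef]; exact Lp y hy p hp
  have hLm : d m / m = ((p : ℝ))⁻¹ * (d A / A) := by
    have h := Lp A hA p⁻¹ (by positivity)
    rw [Rat.cast_inv] at h
    rw [hmdef, one_div]
    exact h
  have e1 : d xp = (p : ℝ) * (d x / x) * xp := by
    rw [← hLxp, div_mul_cancel₀ _ hxp.ne']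
  have e2 : d yp = (p : ℝ) * (d y / y) * yp := by
    rw [← hLyp, div_mul_cancel₀ _ hyp.ne']
  have edA : d A = ((p : ℝ) * (d x / x) * xp + (p : ℝ) * (d y / y) * yp) / 2 := by
    rw [hAdef, dhalf, hadd, e1, e2]
  have key : ((p : ℝ) / α) * (d m / m) = w * s + (1 - w) * t := by
    rw [hLm, edA, hwdef, hsdef, htdef, hAdef]
    field_simp
    ring
  have hconv : Real.exp (w * s + (1 - w) * t) ≤ w * Real.exp s + (1 - w) * Real.exp t := by
    have h := convexOn_exp.2 (Set.mem_univ s) (Set.mem_univ t) hw0 hw1 (by ring)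
    simpa [smul_eq_mul] using h
  have hap : α * ((p : ℝ) / α) = (p : ℝ) := by field_simp
  have hFx : F x ^ ((p : ℝ) / α) = xp * Real.exp s := by
    rw [hF x hx, Real.mul_rpow (by positivity) (Real.exp_pos _).le, ← Real.exp_mul,
        ← Real.rpow_mul hx.le, hap,
        show (d x / x) * ((p : ℝ) / α) = s by rw [hsdef]; ring, hxpdef]
  have hFy : F y ^ ((p : ℝ) / α) = yp * Real.exp t := by
    rw [hF y hy, Real.mul_rpow (by positivity) (Real.exp_pos _).le, ← Real.exp_mul,
        ← Real.rpow_mul hy.le, hap,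
        show (d y / y) * ((p : ℝ) / α) = t by rw [htdef]; ring, hypdef]
  have hmp : m ^ (p : ℝ) = A := by
    rw [hmdef, ← Real.rpow_mul hA.le, one_div, inv_mul_cancel₀ hpne, Real.rpow_one]
  have hFm : F m ^ ((p : ℝ) / α) = A * Real.exp (((p : ℝ) / α) * (d m / m)) := by
    rw [hF m hm, Real.mul_rpow (by positivity) (Real.exp_pos _).le, ← Real.exp_mul,
        ← Real.rpow_mul hm.le, hap, hmp, mul_comm (d m / m)]
  have step : F m ^ ((p : ℝ) / α) ≤ (F x ^ ((p : ℝ) / α) + F y ^ ((p : ℝ) / α)) / 2 := by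
    rw [hFm, hFx, hFy, key]
    calc A * Real.exp (w * s + (1 - w) * t)
        ≤ A * (w * Real.exp s + (1 - w) * Real.exp t) :=
          mul_le_mul_of_nonneg_left hconv hA.le
      _ = (xp * Real.exp s + yp * Real.exp t) / 2 := by
          rw [hAdef, hwdef]
          field_simp
          ring
  have hFm0 : 0 < F m := by rw [hF m hm]; positivity
  have hFmeq : F m = (F m ^ ((p : ℝ) / α)) ^ (1 / ((p : ℝ) / α)) := by
    rw [← Real.rpow_mul hFm0.le, mul_one_div, div_self hpane, Real.rpow_one]
  rw [hFmeq]
  exact Real.rpow_le_rpow (by positivity) step (by positivity)
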